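/- Let A and B be n×n real positive semidefinite matrices with unit trace, tr(A) = tr(B) = 1. Then the Fréchet task distance (1/√2)·‖A^{1/2} − B^{1/2}‖_F equals 1 if and only if A·B = 0. -/

import Mathlib

/-!
With `S = √A` and `T = √B` one has `‖S - T‖_F² = tr A + tr B - 2 tr(ST) = 2 - 2 tr(ST)`, so the
distance is one iff `tr(ST) = 0`. For positive semidefinite `X`, `Y` the identity
`tr(XY) = ‖√X √Y‖_F²` shows `tr(XY) = 0 ↔ √X √Y = 0 ↔ XY = 0`. Applied to `(S, T)` and to `(A, B)`
this gives `tr(ST) = 0 ↔ ST = 0 ↔ tr(AB) = 0 ↔ AB = 0`.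
-/

/-- The Frobenius norm of a real square matrix: the square root of the sum of
squares of all entries. -/
noncomputable def frobeniusNorm {n : ℕ} (M : Matrix (Fin n) (Fin n) ℝ) : ℝ :=
  Real.sqrt (∑ i, ∑ j, (M i j) ^ 2)

/-- The positive semidefinite square root of a positive semidefinite matrix
(removed from Mathlib; restored here with its former definition). -/
noncomputable def Matrix.PosSemidef.sqrt {m 𝕜 : Type*} [Fintype m] [DecidableEq m] [RCLike 𝕜]
    [PartialOrder 𝕜] [StarOrderedRing 𝕜]
    {A : Matrix m m 𝕜} (hA : A.PosSemidef) : Matrix m m 𝕜 :=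
  hA.1.eigenvectorUnitary.1 * Matrix.diagonal ((↑) ∘ (√·) ∘ hA.1.eigenvalues) *
  (star hA.1.eigenvectorUnitary : Matrix m m 𝕜)

open Matrix
open scoped MatrixOrder ComplexOrder

theorem Matrix.PosSemidef.sqrt_eq_cfcSqrt {m : Type*} [Fintype m] [DecidableEq m]
    {A : Matrix m m ℝ} (hA : A.PosSemidef) : hA.sqrt = CFC.sqrt A := by
  rw [CFC.sqrt_eq_real_sqrt A hA.nonneg, cfcₙ_eq_cfc, IsHermitian.cfc_eq hA.1, IsHermitian.cfc,
    Unitary.conjStarAlgAut_apply, PosSemidef.sqrt]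

namespace Matrix.PosSemidef

variable {m 𝕜 : Type*} [Fintype m] [DecidableEq m] [RCLike 𝕜] {X Y : Matrix m m 𝕜}

theorem trace_mul_eq_zero_iff_sqrt_mul_sqrt_eq_zero (hX : X.PosSemidef) (hY : Y.PosSemidef) :
    (X * Y).trace = 0 ↔ CFC.sqrt X * CFC.sqrt Y = 0 := by
  set s := CFC.sqrt X
  set t := CFC.sqrt Y
  have hss : s * s = X := CFC.sqrt_mul_sqrt_self X hX.nonneg
  have htt : t * t = Y := CFC.sqrt_mul_sqrt_self Y hY.nonneg
  have hs : sᴴ = s := (CFC.sqrt_nonneg X).isSelfAdjoint.star_eq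
  have ht : tᴴ = t := (CFC.sqrt_nonneg Y).isSelfAdjoint.star_eq
  have h : (X * Y).trace = ((s * t)ᴴ * (s * t)).trace := by
    rw [← hss, ← htt, conjTranspose_mul, hs, ht, ← mul_assoc, trace_mul_cycle]
    simp only [mul_assoc]
  rw [h, trace_conjTranspose_mul_self_eq_zero_iff]

theorem trace_mul_eq_zero_iff (hX : X.PosSemidef) (hY : Y.PosSemidef) :
    (X * Y).trace = 0 ↔ X * Y = 0 := by
  refine ⟨fun h => ?_, fun h => by rw [h, trace_zero]⟩
  have hst := (trace_mul_eq_zero_iff_sqrt_mul_sqrt_eq_zero hX hY).mp h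
  calc X * Y = CFC.sqrt X * (CFC.sqrt X * CFC.sqrt Y) * CFC.sqrt Y := by
        conv_lhs => rw [← CFC.sqrt_mul_sqrt_self X hX.nonneg, ← CFC.sqrt_mul_sqrt_self Y hY.nonneg]
        simp only [mul_assoc]
    _ = 0 := by rw [hst, mul_zero, zero_mul]

end Matrix.PosSemidef

theorem Matrix.trace_conjTranspose_sub_mul_sub {m R : Type*} [Fintype m] [CommRing R] [StarRing R]
    {S T : Matrix m m R} (hS : S.IsHermitian) (hT : T.IsHermitian) :
    ((S - T)ᴴ * (S - T)).trace = (S * S).trace + (T * T).trace - 2 * (S * T).trace := by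
  have hTS : (T * S).trace = (S * T).trace := trace_mul_comm T S
  rw [conjTranspose_sub, hS.eq, hT.eq, sub_mul, mul_sub, mul_sub, trace_sub, trace_sub, trace_sub,
    hTS]
  ring

theorem frobeniusNorm_eq_sqrt_trace {n : ℕ} (M : Matrix (Fin n) (Fin n) ℝ) :
    frobeniusNorm M = √(Mᴴ * M).trace := by
  rw [frobeniusNorm, trace, Finset.sum_comm]
  simp only [diag_apply, mul_apply, conjTranspose_apply, star_trivial, sq]

/-- For `n × n` real positive semidefinite matrices `A`, `B` with unit trace,
the Fréchet task distance `(1/√2) ‖A^{1/2} − B^{1/2}‖_F` equals one if and only if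
`A * B = 0`. -/
theorem frechet_distance_eq_one_iff {n : ℕ} {A B : Matrix (Fin n) (Fin n) ℝ}
    (hA : A.PosSemidef) (hB : B.PosSemidef)
    (htrA : A.trace = 1) (htrB : B.trace = 1) :
    (1 / Real.sqrt 2) * frobeniusNorm (hA.sqrt - hB.sqrt) = 1 ↔ A * B = 0 := by
  rw [hA.sqrt_eq_cfcSqrt, hB.sqrt_eq_cfcSqrt]
  have hS : (CFC.sqrt A).PosSemidef := (CFC.sqrt_nonneg A).posSemidef
  have hT : (CFC.sqrt B).PosSemidef := (CFC.sqrt_nonneg B).posSemidef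
  have hdist : ((CFC.sqrt A - CFC.sqrt B)ᴴ * (CFC.sqrt A - CFC.sqrt B)).trace
      = 2 - 2 * (CFC.sqrt A * CFC.sqrt B).trace := by
    rw [trace_conjTranspose_sub_mul_sub hS.isHermitian hT.isHermitian,
      CFC.sqrt_mul_sqrt_self A hA.nonneg, CFC.sqrt_mul_sqrt_self B hB.nonneg, htrA, htrB]
    ring
  calc (1 / √2) * frobeniusNorm (CFC.sqrt A - CFC.sqrt B) = 1
      ↔ (CFC.sqrt A * CFC.sqrt B).trace = 0 := by
        rw [frobeniusNorm_eq_sqrt_trace, hdist, one_div_mul_eq_div, ← Real.sqrt_div' _ zero_le_two,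
          Real.sqrt_eq_one, div_eq_one_iff_eq two_ne_zero]
        constructor <;> intro h <;> linarith
    _ ↔ CFC.sqrt A * CFC.sqrt B = 0 := hS.trace_mul_eq_zero_iff hT
    _ ↔ (A * B).trace = 0 := (hA.trace_mul_eq_zero_iff_sqrt_mul_sqrt_eq_zero hB).symm
    _ ↔ A * B = 0 := hA.trace_mul_eq_zero_iff hB
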